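/- Let U, V : 𝒳 → 𝒴 be isometries between finite-dimensional complex Hilbert spaces with Tr(U*V) = 0, such that αU + βV is a scalar multiple of an isometry for all α, β ∈ ℂ. Then U*V = 0. -/

import Mathlib

open Matrix Kronecker BigOperators ComplexOrder

noncomputable section

/-- The positive semidefinite square root, as defined in the older Mathlib
(`Matrix.PosSemidef.sqrt`, removed since). -/
noncomputable def Matrix.PosSemidef.sqrt {n 𝕜 : Type*} [Fintype n] [DecidableEq n] [RCLike 𝕜]
    {A : Matrix n n 𝕜} (hA : A.PosSemidef) : Matrix n n 𝕜 :=
  hA.1.eigenvectorUnitary.1 * diagonal ((↑) ∘ (√·) ∘ hA.1.eigenvalues) *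
  (star hA.1.eigenvectorUnitary : Matrix n n 𝕜)

/-- Trace norm (sum of singular values) of a complex matrix. -/
noncomputable def traceNorm {l m : Type*} [Fintype l] [Fintype m] [DecidableEq m]
    (A : Matrix l m ℂ) : ℝ :=
  ((Matrix.posSemidef_conjTranspose_mul_self A).sqrt.trace).re

/-- Frobenius norm. -/
noncomputable def frobNorm {l m : Type*} [Fintype l] [Fintype m]
    (A : Matrix l m ℂ) : ℝ :=
  Real.sqrt ((Aᴴ * A).trace.re)

/-- Partial transpose on the first tensor factor. -/
def ptranspose {a b : Type*} (X : Matrix (a × b) (a × b) ℂ) : Matrix (a × b) (a × b) ℂ :=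
  Matrix.of fun p q => X (q.1, p.2) (p.1, q.2)

/-- Outer product `u v*`. -/
def outer {a : Type*} (u v : a → ℂ) : Matrix a a ℂ :=
  Matrix.of fun p q => u p * star (v q)

/-- Density operator: positive semidefinite with trace one. -/
def IsDensity {a : Type*} [Fintype a] (ρ : Matrix a a ℂ) : Prop :=
  ρ.PosSemidef ∧ ρ.trace = 1

/-- Maximally entangled unit vector in `ℂⁿ ⊗ ℂᵐ`. -/
def MaxEntangled (n m : ℕ) (u : Fin n × Fin m → ℂ) : Prop :=
  ∃ (x : Fin (min n m) → EuclideanSpace ℂ (Fin n))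
    (y : Fin (min n m) → EuclideanSpace ℂ (Fin m)),
    Orthonormal ℂ x ∧ Orthonormal ℂ y ∧
      ∀ p : Fin n × Fin m,
        u p = (1 / Real.sqrt (min n m) : ℝ) * ∑ i, x i p.1 * y i p.2

/-- Extension `Φ ⊗ I` of a matrix map to a system with ancilla `c`. -/
def tensorExt {a b c : Type*} [Fintype a] [DecidableEq a] [Fintype c]
    (Φ : Matrix a a ℂ →ₗ[ℂ] Matrix b b ℂ)
    (X : Matrix (a × c) (a × c) ℂ) : Matrix (b × c) (b × c) ℂ :=
  Matrix.of fun p q => Φ (Matrix.of fun i j => X (i, p.2) (j, q.2)) p.1 q.1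

/-- Quantum channel: completely positive and trace preserving. -/
def IsChannel {a b : Type*} [Fintype a] [DecidableEq a] [Fintype b]
    (Φ : Matrix a a ℂ →ₗ[ℂ] Matrix b b ℂ) : Prop :=
  (∀ X, (Φ X).trace = X.trace) ∧
    ∀ (k : ℕ) (X : Matrix (a × Fin k) (a × Fin k) ℂ),
      X.PosSemidef → (tensorExt Φ X).PosSemidef

/-- Partial trace over the second tensor factor. -/
def ptraceRight {a b : Type*} [Fintype b] (M : Matrix (a × b) (a × b) ℂ) :
    Matrix a a ℂ :=
  Matrix.of fun i k => ∑ c, M (i, c) (k, c)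

/-- Partial trace over the first tensor factor. -/
def ptraceLeft {a b : Type*} [Fintype a] (M : Matrix (a × b) (a × b) ℂ) :
    Matrix b b ℂ :=
  Matrix.of fun i k => ∑ c, M (c, i) (c, k)

/-- Canonical maximally entangled state `τ = (1/d) vec(I)vec(I)*` on `a ⊗ a`. -/
noncomputable def tauGen {a : Type*} [Fintype a] [DecidableEq a] :
    Matrix (a × a) (a × a) ℂ :=
  Matrix.of fun p q =>
    (Fintype.card a : ℂ)⁻¹ * (if p.1 = p.2 then 1 else 0) * (if q.1 = q.2 then 1 else 0)

/-- The operator `τ ⊗ σ` on `a ⊗ (a ⊗ r)`. -/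
noncomputable def tauSigma {a r : Type*} [Fintype a] [DecidableEq a]
    (σ : Matrix r r ℂ) : Matrix (a × (a × r)) (a × (a × r)) ℂ :=
  Matrix.of fun p q => tauGen (p.1, p.2.1) (q.1, q.2.1) * σ p.2.2 q.2.2

/-- Fidelity of two positive semidefinite matrices. -/
noncomputable def fidelity {a : Type*} [Fintype a] [DecidableEq a]
    {P Q : Matrix a a ℂ} (hP : P.PosSemidef) (hQ : Q.PosSemidef) : ℝ :=
  traceNorm (hP.sqrt * hQ.sqrt)

/-! Since `U*U = V*V = 1`, the hypothesis says that `ᾱβ U*V + β̄α V*U` is a scalar matrix for all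
`α, β`. Taking `α = 1` and `β ∈ {1, i}` exhibits `2 U*V` as a combination of two scalar matrices,
so `U*V` is scalar, and a traceless scalar matrix is zero. -/

theorem Matrix.conjTranspose_mul_self_smul_add_smul {R m n : Type*} [CommRing R] [StarRing R]
    [Fintype m] [DecidableEq n] {U V : Matrix m n R} (hU : Uᴴ * U = 1) (hV : Vᴴ * V = 1)
    (α β : R) :
    (α • U + β • V)ᴴ * (α • U + β • V) =
      (star α * α + star β * β) • 1 + (star α * β) • (Uᴴ * V) + (star β * α) • (Vᴴ * U) := by
  simp only [conjTranspose_add, conjTranspose_smul, Matrix.add_mul, Matrix.mul_add,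
    Matrix.smul_mul, Matrix.mul_smul, hU, hV]
  module

theorem Submodule.mem_of_forall_smul_add_star_smul_mem {E : Type*} [AddCommGroup E] [Module ℂ E]
    {p : Submodule ℂ E} {x y : E} (h : ∀ z : ℂ, z • x + star z • y ∈ p) : x ∈ p := by
  have hsum : x + y ∈ p := by simpa using h 1
  have hdiff : Complex.I • x - Complex.I • y ∈ p := by
    simpa [Complex.conj_I, sub_eq_add_neg] using h Complex.I
  have htwo : (2 : ℂ) • x ∈ p := by
    convert p.sub_mem hsum (p.smul_mem Complex.I hdiff) using 1
    rw [smul_sub, smul_smul, smul_smul, Complex.I_mul_I]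
    module
  simpa using p.smul_mem (2⁻¹ : ℂ) htwo

theorem Matrix.eq_zero_of_mem_span_one_of_trace_eq_zero {K n : Type*} [Field K] [CharZero K]
    [Fintype n] [DecidableEq n] {M : Matrix n n K} (hM : M ∈ K ∙ (1 : Matrix n n K))
    (htr : M.trace = 0) : M = 0 := by
  obtain ⟨s, rfl⟩ := Submodule.mem_span_singleton.mp hM
  rcases isEmpty_or_nonempty n with hn | hn
  · exact Subsingleton.elim _ _
  · rw [trace_smul, trace_one, smul_eq_mul, mul_eq_zero] at htr
    rcases htr with rfl | hcard
    · exact zero_smul K _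
    · exact absurd hcard (Nat.cast_ne_zero.mpr Fintype.card_ne_zero)

/-- If `U, V` are Hilbert–Schmidt-orthogonal isometries such that every complex linear
combination `αU + βV` is a scalar multiple of an isometry, then `U*V = 0`. -/
theorem stmt9 (n m : ℕ) (U V : Matrix (Fin m) (Fin n) ℂ)
    (hU : Uᴴ * U = 1) (hV : Vᴴ * V = 1) (horth : (Uᴴ * V).trace = 0)
    (h : ∀ α β : ℂ, ∃ c : ℝ, 0 ≤ c ∧
      ((α • U + β • V)ᴴ * (α • U + β • V)) = (c : ℂ) • (1 : Matrix (Fin n) (Fin n) ℂ)) :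
    Uᴴ * V = 0 := by
  refine eq_zero_of_mem_span_one_of_trace_eq_zero
    (Submodule.mem_of_forall_smul_add_star_smul_mem (y := Vᴴ * U) fun z => ?_) horth
  obtain ⟨c, -, hc⟩ := h 1 z
  rw [conjTranspose_mul_self_smul_add_smul hU hV] at hc
  simp only [star_one, one_mul, mul_one] at hc
  rw [Submodule.mem_span_singleton]
  exact ⟨c - (1 + star z * z), by rw [sub_smul, ← hc]; abel⟩
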